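/- arXiv:1511.06094 — 3 statements merged into one kernel-verified Lean document; each statement's English description precedes it below -/
import Mathlib

section
/- Let (X(n))_{n≥0} = (X₁(n), X₂(n)) be a time-homogeneous Markov chain on the countable state space ℤ₊^k × ℤ₊^m with transition kernel Q. Assume: (1) for every initial state (i₀,j₀), almost surely every coordinate of X₂(n) tends to +∞ as n → ∞; (2) there exist a stochastic matrix P = (P_{i,j}) on ℤ₊^k and a probability distribution π = (π_j) on ℤ₊^k such that for every i ∈ ℤ₊^k one has sup_j |P^n(i,j) − π_j| → 0 as n → ∞ (P is ergodic with unique stationary distribution π), and such that for all i, j ∈ ℤ₊^k and every l ∈ ℤ₊^m with all coordinates strictly positive, ℙ(X₁(n+1) = j | X₁(n) = i, X₂(n) = l) = P_{i,j}. Then for every initial state (i₀,j₀), sup_j |ℙ(X₁(n) = j | X₁(0)=i₀, X₂(0)=j₀) − π_j| → 0 as n → ∞, i.e. the distribution of X₁(n) converges to π in total variation. -/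
open MeasureTheory Filter Topology Classical

/-- `n`-step transition probabilities of a transition matrix `P` on a countable set. -/
noncomputable def matPow {I : Type*} (P : I → I → ℝ) : ℕ → I → I → ℝ
  | 0 => fun i j => if i = j then 1 else 0
  | n + 1 => fun i j => ∑' x, matPow P n i x * P x j

/-- `P` is a stochastic matrix: nonnegative entries with rows summing to `1`. -/
def IsStochasticMatrix {I : Type*} (P : I → I → ℝ) : Prop :=
  (∀ i j, 0 ≤ P i j) ∧ ∀ i, HasSum (P i) 1

/-- `π` is a probability distribution on a countable set. -/
def IsProbabilityVector {I : Type*} (π : I → ℝ) : Prop :=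
  (∀ j, 0 ≤ π j) ∧ HasSum π 1

/-- `X` is a time-homogeneous Markov chain with transition kernel `Q` under `μ`:
for every finite path and every next state `y`, the probability of following the path and
then moving to `y` equals `Q` at the path's endpoint times the probability of the path
(this is the usual conditional-probability formulation, valid also when the conditioning
event has probability zero). -/
def IsMarkovChainKernel {Ω S : Type*} [MeasurableSpace Ω]
    (μ : Measure Ω) (X : ℕ → Ω → S) (Q : S → S → ℝ) : Prop :=
  ∀ (n : ℕ) (path : ℕ → S) (y : S),
    (μ {ω | (∀ i ≤ n, X i ω = path i) ∧ X (n + 1) ω = y}).toReal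
      = Q (path n) y * (μ {ω | ∀ i ≤ n, X i ω = path i}).toReal

open scoped ENNReal
set_option linter.unusedSectionVars false
set_option maxHeartbeats 1000000


section Mat
variable {I : Type*} {P : I → I → ℝ}

lemma matPow_nonneg (hP : IsStochasticMatrix P) (n : ℕ) (i j : I) : 0 ≤ matPow P n i j := by
  induction n generalizing i j with
  | zero => simp only [matPow]; positivity
  | succ n ih =>
    exact tsum_nonneg fun x => mul_nonneg (ih i x) (hP.1 x j)

/-- ENNReal version of matPow -/
noncomputable def mpE {I : Type*} (P : I → I → ℝ) : ℕ → I → I → ℝ≥0∞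
  | 0 => fun i j => if i = j then 1 else 0
  | n + 1 => fun i j => ∑' x, mpE P n i x * ENNReal.ofReal (P x j)

lemma Pe_row (hP : IsStochasticMatrix P) (x : I) : ∑' j, ENNReal.ofReal (P x j) = 1 := by
  rw [← ENNReal.ofReal_tsum_of_nonneg (hP.1 x) (hP.2 x).summable, (hP.2 x).tsum_eq,
    ENNReal.ofReal_one]

lemma mpE_row (hP : IsStochasticMatrix P) (n : ℕ) (i : I) : ∑' j, mpE P n i j = 1 := by
  induction n generalizing i with
  | zero =>
    simp only [mpE]
    rw [tsum_eq_single i (fun j hj => by simp [Ne.symm hj])]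
    simp
  | succ n ih =>
    simp only [mpE]
    rw [ENNReal.tsum_comm]
    calc ∑' x, ∑' j, mpE P n i x * ENNReal.ofReal (P x j)
        = ∑' x, mpE P n i x * ∑' j, ENNReal.ofReal (P x j) := by
          simp [ENNReal.tsum_mul_left]
      _ = 1 := by simp [Pe_row hP, ih]

lemma mpE_eq (hP : IsStochasticMatrix P) (n : ℕ) (i j : I) :
    mpE P n i j = ENNReal.ofReal (matPow P n i j) := by
  induction n generalizing i j with
  | zero => simp only [mpE, matPow]; split <;> simp
  | succ n ih =>
    simp only [mpE, matPow]
    have hsum : ∑' x, mpE P n i x * ENNReal.ofReal (P x j) ≠ ⊤ := by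
      refine ne_top_of_le_ne_top (by simp : (1:ℝ≥0∞) ≠ ⊤) ?_
      calc ∑' x, mpE P n i x * ENNReal.ofReal (P x j) ≤ ∑' x, mpE P n i x * 1 := by
            gcongr with x
            rw [show (1:ℝ≥0∞) = ENNReal.ofReal 1 by simp]
            exact ENNReal.ofReal_le_ofReal (by
              have := le_hasSum (hP.2 x) j (fun b _ => hP.1 x b); linarith)
        _ = 1 := by simpa using mpE_row hP n i
    have hnn : ∀ x, 0 ≤ matPow P n i x * P x j :=
      fun x => mul_nonneg (matPow_nonneg hP n i x) (hP.1 x j)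
    have hsummable : Summable (fun x => matPow P n i x * P x j) := by
      have h2 := ENNReal.summable_toReal hsum
      convert h2 using 2 with x
      rw [ih, ← ENNReal.ofReal_mul (matPow_nonneg hP n i x), ENNReal.toReal_ofReal (hnn x)]
    rw [ENNReal.ofReal_tsum_of_nonneg hnn hsummable]
    congr 1 with x
    rw [ih, ENNReal.ofReal_mul (matPow_nonneg hP n i x)]

lemma matPow_le_one (hP : IsStochasticMatrix P) (n : ℕ) (i j : I) : matPow P n i j ≤ 1 := by
  have h := mpE_row hP n i
  have h1 : mpE P n i j ≤ 1 := h ▸ ENNReal.le_tsum j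
  rw [mpE_eq hP] at h1
  have h2 := ENNReal.toReal_mono (by simp) h1
  rwa [ENNReal.toReal_ofReal (matPow_nonneg hP n i j), ENNReal.toReal_one] at h2

end Mat



lemma aux_toReal_to_ennreal {a b : ℝ≥0∞} {r : ℝ} (ha : a ≠ ⊤) (hb : b ≠ ⊤) (hr : 0 ≤ r)
    (h : a.toReal = r * b.toReal) : a = ENNReal.ofReal r * b := by
  rw [← ENNReal.ofReal_toReal ha, h, ENNReal.ofReal_mul hr, ENNReal.ofReal_toReal hb]

section Cyl
variable {Ω S : Type*} [MeasurableSpace Ω] [Countable S] [MeasurableSpace S]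
  [MeasurableSingletonClass S]
  {μ : Measure Ω} [IsProbabilityMeasure μ] {X : ℕ → Ω → S} (hX : ∀ n, Measurable (X n))

/-- cylinder set -/
def cylSet (X : ℕ → Ω → S) (n : ℕ) (p : Fin (n+1) → S) : Set Ω :=
  {ω | ∀ t : Fin (n+1), X t ω = p t}

include hX in
lemma cylSet_measurable (n : ℕ) (p : Fin (n+1) → S) : MeasurableSet (cylSet X n p) := by
  have : cylSet X n p = ⋂ t : Fin (n+1), X t ⁻¹' {p t} := by
    ext ω; simp [cylSet]
  rw [this]
  exact MeasurableSet.iInter fun t => hX t (measurableSet_singleton _)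

include hX in
lemma measure_prefix_inter (n : ℕ) (T : Set (Fin (n+1) → S)) (W : Set Ω)
    (hW : MeasurableSet W) :
    μ ({ω | (fun t : Fin (n+1) => X t ω) ∈ T} ∩ W) = ∑' p : T, μ (cylSet X n p ∩ W) := by
  have hU : {ω | (fun t : Fin (n+1) => X t ω) ∈ T} ∩ W = ⋃ p : T, (cylSet X n p ∩ W) := by
    ext ω
    constructor
    · rintro ⟨hT, hWω⟩
      exact Set.mem_iUnion.2 ⟨⟨fun t => X t ω, hT⟩, fun t => rfl, hWω⟩
    · rintro h
      obtain ⟨p, hp, hWω⟩ := Set.mem_iUnion.1 h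
      have he : (fun t : Fin (n+1) => X t ω) = (p : Fin (n+1) → S) := funext fun t => hp t
      refine ⟨?_, hWω⟩
      show (fun t : Fin (n+1) => X t ω) ∈ T
      rw [he]; exact p.2
  rw [hU]
  refine measure_iUnion ?_ fun p => (cylSet_measurable hX n p).inter hW
  intro p q hpq
  refine Set.disjoint_left.2 fun ω hωp hωq => hpq ?_
  apply Subtype.ext
  funext t
  rw [← hωp.1 t, ← hωq.1 t]

set_option linter.unusedSectionVars false in
lemma hmc_cyl {Q : S → S → ℝ} (hmc : IsMarkovChainKernel μ X Q) (n : ℕ)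
    (p : Fin (n+1) → S) (y : S) :
    (μ (cylSet X n p ∩ {ω | X (n+1) ω = y})).toReal
      = Q (p (Fin.last n)) y * (μ (cylSet X n p)).toReal := by
  set path : ℕ → S := fun i => p ⟨min i n, by omega⟩ with hpath
  have hset : {ω | ∀ i ≤ n, X i ω = path i} = cylSet X n p := by
    ext ω
    constructor
    · intro h t
      have ht : (t : ℕ) ≤ n := Fin.is_le t
      have := h t ht
      simpa [hpath, Nat.min_eq_left ht, Fin.eta] using this
    · intro h i hi
      have := h ⟨i, by omega⟩
      simpa [hpath, Nat.min_eq_left hi] using this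
  have hset2 : {ω | (∀ i ≤ n, X i ω = path i) ∧ X (n + 1) ω = y}
      = cylSet X n p ∩ {ω | X (n+1) ω = y} := by
    ext ω
    simp only [Set.mem_setOf_eq, Set.mem_inter_iff]
    constructor
    · rintro ⟨h1, h2⟩; exact ⟨hset ▸ (by exact h1 : ω ∈ {ω | ∀ i ≤ n, X i ω = path i}), h2⟩
    · rintro ⟨h1, h2⟩; exact ⟨(by rw [hset]; exact h1 : ω ∈ {ω | ∀ i ≤ n, X i ω = path i}), h2⟩
  have hlast : path n = p (Fin.last n) := by
    simp [hpath, Fin.last]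
  have := hmc n path y
  rw [hset, hset2, hlast] at this
  exact this

end Cyl

set_option linter.unusedSectionVars false

section Prod
variable {Ω A B : Type*} [MeasurableSpace Ω] [Countable A] [Countable B]
  [MeasurableSpace (A × B)] [MeasurableSingletonClass (A × B)]
  {μ : Measure Ω} [IsProbabilityMeasure μ] {X : ℕ → Ω → A × B} (hX : ∀ n, Measurable (X n))
  {Q : (A × B) → (A × B) → ℝ}

/-- marginal transition kernel for the first coordinate -/
noncomputable def qE (Q : (A × B) → (A × B) → ℝ) (s : A × B) (j : A) : ℝ≥0∞ :=
  ∑' l, ENNReal.ofReal (Q s (j, l))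

include hX in
lemma measurable_X_set (n : ℕ) (U : Set (A × B)) : MeasurableSet (X n ⁻¹' U) :=
  hX n (Set.to_countable U).measurableSet

include hX in
lemma cyl_margin (hQnn : ∀ s y, 0 ≤ Q s y) (hmc : IsMarkovChainKernel μ X Q) (n : ℕ)
    (p : Fin (n+1) → A × B) (j : A) :
    μ (cylSet X n p ∩ {ω | (X (n+1) ω).1 = j})
      = qE Q (p (Fin.last n)) j * μ (cylSet X n p) := by
  have hU : cylSet X n p ∩ {ω | (X (n+1) ω).1 = j}
      = ⋃ l : B, (cylSet X n p ∩ {ω | X (n+1) ω = (j, l)}) := by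
    ext ω
    simp only [Set.mem_inter_iff, Set.mem_iUnion, Set.mem_setOf_eq]
    constructor
    · rintro ⟨h1, h2⟩
      exact ⟨(X (n+1) ω).2, h1, by rw [← h2]⟩
    · rintro ⟨l, h1, h2⟩
      exact ⟨h1, by rw [h2]⟩
  have hmeas : ∀ l : B, MeasurableSet (cylSet X n p ∩ {ω | X (n+1) ω = (j, l)}) := by
    intro l
    exact (cylSet_measurable hX n p).inter (measurable_X_set hX (n+1) {(j,l)})
  have hdisj : Pairwise (Function.onFun Disjoint fun l : B => cylSet X n p ∩ {ω | X (n+1) ω = (j, l)}) := by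
    intro l l' hll'
    refine Set.disjoint_left.2 fun ω h1 h2 => hll' ?_
    have := h1.2.symm.trans h2.2
    exact (Prod.ext_iff.1 this).2
  rw [hU, measure_iUnion hdisj hmeas]
  have hterm : ∀ l : B, μ (cylSet X n p ∩ {ω | X (n+1) ω = (j, l)})
      = ENNReal.ofReal (Q (p (Fin.last n)) (j, l)) * μ (cylSet X n p) := by
    intro l
    exact aux_toReal_to_ennreal (measure_ne_top μ _) (measure_ne_top μ _)
      (hQnn _ _) (hmc_cyl hmc n p (j, l))
  simp_rw [hterm, ENNReal.tsum_mul_right]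
  rfl

include hX in
lemma key_step (hQ : (∀ s y, 0 ≤ Q s y) ∧ ∀ s, HasSum (Q s) 1)
    (hmc : IsMarkovChainKernel μ X Q) (n : ℕ) (T : Set (Fin (n+1) → A × B))
    (il : A × B) (j : A) (r : ℝ) (hr : 0 ≤ r)
    (hT : ∀ p ∈ T, p (Fin.last n) = il)
    (hq : μ {ω | X n ω = il} ≠ 0 → qE Q il j = ENNReal.ofReal r) :
    μ ({ω | (fun t : Fin (n+1) => X t ω) ∈ T} ∩ {ω | (X (n+1) ω).1 = j})
      = ENNReal.ofReal r * μ {ω | (fun t : Fin (n+1) => X t ω) ∈ T} := by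
  have hW : MeasurableSet {ω | (X (n+1) ω).1 = j} := by
    have : {ω | (X (n+1) ω).1 = j} = X (n+1) ⁻¹' {y | y.1 = j} := rfl
    rw [this]; exact measurable_X_set hX (n+1) _
  rw [measure_prefix_inter hX n T _ hW]
  have huniv : μ {ω | (fun t : Fin (n+1) => X t ω) ∈ T} = ∑' p : T, μ (cylSet X n p) := by
    have := measure_prefix_inter (μ := μ) hX n T Set.univ MeasurableSet.univ
    simpa using this
  rw [huniv, ← ENNReal.tsum_mul_left]
  congr 1
  funext p
  by_cases hz : μ (cylSet X n (p : Fin (n+1) → A × B)) = 0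
  · have h1 : μ (cylSet X n (p : Fin (n+1) → A × B) ∩ {ω | (X (n+1) ω).1 = j}) = 0 :=
      measure_mono_null Set.inter_subset_left hz
    rw [h1, hz, mul_zero]
  · have hsub : cylSet X n (p : Fin (n+1) → A × B) ⊆ {ω | X n ω = il} := by
      intro ω hω
      have := hω (Fin.last n)
      simp only [Fin.val_last] at this
      rw [Set.mem_setOf_eq, this, hT p p.2]
    have hM : μ {ω | X n ω = il} ≠ 0 := fun h =>
      hz (measure_mono_null hsub h)
    rw [cyl_margin hX hQ.1 hmc n p j, hT p p.2, hq hM]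
include hX in
lemma qE_eq (hQnn : ∀ s y, 0 ≤ Q s y) (hmc : IsMarkovChainKernel μ X Q)
    (n : ℕ) (il : A × B) (j : A) (r : ℝ) (hr : 0 ≤ r)
    (h2n : (μ {ω | X n ω = il ∧ (X (n + 1) ω).1 = j}).toReal
      = r * (μ {ω | X n ω = il}).toReal)
    (hM : μ {ω | X n ω = il} ≠ 0) : qE Q il j = ENNReal.ofReal r := by
  set T : Set (Fin (n+1) → A × B) := {p | p (Fin.last n) = il} with hTdef
  have hG : {ω | X n ω = il} = {ω | (fun t : Fin (n+1) => X t ω) ∈ T} := by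
    ext ω
    simp only [Set.mem_setOf_eq, hTdef]
    constructor
    · intro h; show X ((Fin.last n : Fin (n+1)) : ℕ) ω = il; simpa [Fin.val_last]
    · intro h; have : X ((Fin.last n : Fin (n+1)) : ℕ) ω = il := h
      simpa [Fin.val_last] using this
  have hW : MeasurableSet {ω | (X (n+1) ω).1 = j} := by
    have : {ω | (X (n+1) ω).1 = j} = X (n+1) ⁻¹' {y | y.1 = j} := rfl
    rw [this]; exact measurable_X_set hX (n+1) _
  have hinter : {ω | X n ω = il ∧ (X (n + 1) ω).1 = j}
      = {ω | (fun t : Fin (n+1) => X t ω) ∈ T} ∩ {ω | (X (n+1) ω).1 = j} := by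
    rw [← hG]; rfl
  have hEnn : μ ({ω | (fun t : Fin (n+1) => X t ω) ∈ T} ∩ {ω | (X (n+1) ω).1 = j})
      = ENNReal.ofReal r * μ {ω | (fun t : Fin (n+1) => X t ω) ∈ T} := by
    refine aux_toReal_to_ennreal (measure_ne_top μ _) (measure_ne_top μ _) hr ?_
    rw [← hinter, ← hG]; exact h2n
  have hdecomp : μ ({ω | (fun t : Fin (n+1) => X t ω) ∈ T} ∩ {ω | (X (n+1) ω).1 = j})
      = qE Q il j * μ {ω | (fun t : Fin (n+1) => X t ω) ∈ T} := by
    rw [measure_prefix_inter hX n T _ hW]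
    have huniv : μ {ω | (fun t : Fin (n+1) => X t ω) ∈ T} = ∑' p : T, μ (cylSet X n p) := by
      have := measure_prefix_inter (μ := μ) hX n T Set.univ MeasurableSet.univ
      simpa using this
    rw [huniv, ← ENNReal.tsum_mul_left]
    congr 1
    funext p
    rw [cyl_margin hX hQnn hmc n p j, p.2]
  rw [hdecomp] at hEnn
  rw [mul_comm (qE Q il j) _, mul_comm (ENNReal.ofReal r) _] at hEnn
  exact (ENNReal.mul_right_inj (hG ▸ hM) (measure_ne_top μ _)).1 hEnn

end Prod


lemma iSup_deficit {α : Type*} (σ ρ : α → ℝ≥0∞) (hle : ∀ j, ρ j ≤ σ j)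
    (hfin : ∑' j, σ j ≠ ⊤) (e : ℝ≥0∞) (h : ∑' j, σ j ≤ ∑' j, ρ j + e) (j : α) :
    σ j ≤ ρ j + e := by
  have hσj := ENNReal.tsum_eq_add_tsum_ite (f := σ) j
  have hρj := ENNReal.tsum_eq_add_tsum_ite (f := ρ) j
  set Rσ := ∑' x, if x = j then 0 else σ x with hRσ
  set Rρ := ∑' x, if x = j then 0 else ρ x with hRρ
  have hRle : Rρ ≤ Rσ := by
    refine ENNReal.tsum_le_tsum fun x => ?_
    split
    · exact le_rfl
    · exact hle x
  have hRfin : Rσ ≠ ⊤ := by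
    refine ne_top_of_le_ne_top hfin ?_
    rw [hσj]; exact le_add_self
  have key : σ j + Rσ ≤ (ρ j + e) + Rσ := by
    calc σ j + Rσ = ∑' x, σ x := hσj.symm
      _ ≤ ∑' x, ρ x + e := h
      _ = (ρ j + Rρ) + e := by rw [hρj]
      _ = (ρ j + e) + Rρ := by ring
      _ ≤ (ρ j + e) + Rσ := by gcongr
  exact (ENNReal.add_le_add_iff_right hRfin).1 key

lemma aux_abs_toReal {a b e : ℝ≥0∞} (hab : a ≤ b) (hba : b ≤ a + e)
    (ha : a ≠ ⊤) (he : e ≠ ⊤) : |b.toReal - a.toReal| ≤ e.toReal := by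
  have hb : b ≠ ⊤ := ne_top_of_le_ne_top (ENNReal.add_ne_top.2 ⟨ha, he⟩) hba
  rw [abs_sub_le_iff]
  constructor
  · have := ENNReal.toReal_mono (ENNReal.add_ne_top.2 ⟨ha, he⟩) hba
    rw [ENNReal.toReal_add ha he] at this
    linarith
  · have := ENNReal.toReal_mono hb hab
    have h0 : 0 ≤ e.toReal := ENNReal.toReal_nonneg
    linarith

set_option linter.unusedSectionVars false
set_option maxHeartbeats 1000000

section Main
variable {k m : ℕ} {Ω : Type*} [MeasurableSpace Ω] (μ : Measure Ω) [IsProbabilityMeasure μ]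
  (X : ℕ → Ω → (Fin k → ℕ) × (Fin m → ℕ)) (s : (Fin k → ℕ) × (Fin m → ℕ))

/-- event: start at `s` and second component positive at all times in `[N, t]` -/
def ESet (N t : ℕ) : Set Ω :=
  {ω | X 0 ω = s ∧ ∀ u, N ≤ u → u ≤ t → ∀ r, 0 < ((X u ω).2 r)}

noncomputable def rhoE (N t : ℕ) (i : Fin k → ℕ) : ℝ≥0∞ :=
  μ (ESet X s N t ∩ {ω | (X t ω).1 = i})

variable (hX : ∀ n, Measurable (X n))

include hX in
lemma ESet_measurable (N t : ℕ) : MeasurableSet (ESet X s N t) := by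
  have : ESet X s N t = (X 0 ⁻¹' {s}) ∩
      ⋂ (u : ℕ), ⋂ (_ : N ≤ u), ⋂ (_ : u ≤ t), X u ⁻¹' {y | ∀ r, 0 < y.2 r} := by
    ext ω
    simp [ESet, Set.mem_iInter]
  rw [this]
  exact (measurable_X_set hX 0 _).inter
    (MeasurableSet.iInter fun u => MeasurableSet.iInter fun _ =>
      MeasurableSet.iInter fun _ => measurable_X_set hX u _)

include hX in
lemma rhoE_mass (N t : ℕ) : ∑' i, rhoE μ X s N t i = μ (ESet X s N t) := by
  have hU : ESet X s N t = ⋃ i, (ESet X s N t ∩ {ω | (X t ω).1 = i}) := by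
    ext ω
    simp only [Set.mem_iUnion, Set.mem_inter_iff, Set.mem_setOf_eq]
    exact ⟨fun h => ⟨(X t ω).1, h, rfl⟩, fun ⟨i, h, _⟩ => h⟩
  have hmeas : ∀ i : Fin k → ℕ, MeasurableSet (ESet X s N t ∩ {ω | (X t ω).1 = i}) :=
    fun i => (ESet_measurable X s hX N t).inter (measurable_X_set hX t {y | y.1 = i})
  have hdisj : Pairwise (Function.onFun Disjoint fun i : Fin k → ℕ =>
      ESet X s N t ∩ {ω | (X t ω).1 = i}) := by
    intro i i' hii'
    refine Set.disjoint_left.2 fun ω h1 h2 => hii' ?_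
    rw [← h1.2, ← h2.2]
  conv_rhs => rw [hU]
  rw [measure_iUnion hdisj hmeas]
  rfl

variable {Q : ((Fin k → ℕ) × (Fin m → ℕ)) → ((Fin k → ℕ) × (Fin m → ℕ)) → ℝ}
  {P : (Fin k → ℕ) → (Fin k → ℕ) → ℝ}

include hX in
lemma ESet_step (hQ : (∀ s y, 0 ≤ Q s y) ∧ ∀ s, HasSum (Q s) 1)
    (hmc : IsMarkovChainKernel μ X Q) (hPnn : ∀ i j, 0 ≤ P i j)
    (h2 : ∀ (n : ℕ) (i j : Fin k → ℕ) (l : Fin m → ℕ), (∀ r, 0 < l r) →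
      (μ {ω | X n ω = (i, l) ∧ (X (n + 1) ω).1 = j}).toReal
        = P i j * (μ {ω | X n ω = (i, l)}).toReal)
    (N t : ℕ) (hNt : N ≤ t) (j : Fin k → ℕ) :
    μ (ESet X s N t ∩ {ω | (X (t+1) ω).1 = j})
      = ∑' i, ENNReal.ofReal (P i j) * rhoE μ X s N t i := by
  classical
  -- partition according to the value of `X t`
  have hU : ESet X s N t ∩ {ω | (X (t+1) ω).1 = j}
      = ⋃ il : (Fin k → ℕ) × (Fin m → ℕ),
          ((ESet X s N t ∩ {ω | X t ω = il}) ∩ {ω | (X (t+1) ω).1 = j}) := by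
    ext ω
    simp only [Set.mem_iUnion, Set.mem_inter_iff, Set.mem_setOf_eq]
    exact ⟨fun ⟨h1, h2⟩ => ⟨X t ω, ⟨h1, rfl⟩, h2⟩, fun ⟨il, ⟨h1, _⟩, h2⟩ => ⟨h1, h2⟩⟩
  rw [hU, measure_iUnion ?disj ?meas]
  case disj =>
    intro il il' h
    refine Set.disjoint_left.2 fun ω h1 h2 => h ?_
    rw [← h1.1.2, ← h2.1.2]
  case meas =>
    intro il
    exact ((ESet_measurable X s hX N t).inter (measurable_X_set hX t {il})).inter
      (measurable_X_set hX (t+1) {y | y.1 = j})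
  -- identify each piece
  have hterm : ∀ il : (Fin k → ℕ) × (Fin m → ℕ),
      μ ((ESet X s N t ∩ {ω | X t ω = il}) ∩ {ω | (X (t+1) ω).1 = j})
        = ENNReal.ofReal (P il.1 j) * μ (ESet X s N t ∩ {ω | X t ω = il}) := by
    intro il
    by_cases hpos : ∀ r, 0 < il.2 r
    · -- use the Markov transition
      set T : Set (Fin (t+1) → (Fin k → ℕ) × (Fin m → ℕ)) :=
        {p | p 0 = s ∧ (∀ u : Fin (t+1), N ≤ (u : ℕ) → ∀ r, 0 < (p u).2 r) ∧
          p (Fin.last t) = il} with hTdef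
      have hset : ESet X s N t ∩ {ω | X t ω = il}
          = {ω | (fun u : Fin (t+1) => X u ω) ∈ T} := by
        ext ω
        simp only [Set.mem_inter_iff, Set.mem_setOf_eq, hTdef, ESet]
        constructor
        · rintro ⟨⟨h0, hpos'⟩, ht⟩
          refine ⟨by simpa using h0, fun u hu r => hpos' u hu (Fin.is_le u) r, ?_⟩
          simpa [Fin.val_last] using ht
        · rintro ⟨h0, hpos', ht⟩
          refine ⟨⟨by simpa using h0, fun u hu hut r => ?_⟩, ?_⟩
          · have := hpos' ⟨u, by omega⟩ hu r
            simpa using this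
          · simpa [Fin.val_last] using ht
      rw [hset]
      refine key_step hX hQ hmc t T il j (P il.1 j) (hPnn _ _)
        (fun p hp => hp.2.2) (fun hM => ?_)
      exact qE_eq hX hQ.1 hmc t il j (P il.1 j) (hPnn _ _)
        (by have := h2 t il.1 j il.2 hpos; simpa using this) hM
    · -- the event is empty
      have hempty : ESet X s N t ∩ {ω | X t ω = il} = ∅ := by
        ext ω
        simp only [Set.mem_inter_iff, Set.mem_setOf_eq, Set.mem_empty_iff_false,
          iff_false, not_and, ESet]
        rintro ⟨h0, hpos'⟩ ht
        exact hpos fun r => by rw [← ht]; exact hpos' t hNt le_rfl r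
      rw [hempty]
      simp
  calc ∑' il : (Fin k → ℕ) × (Fin m → ℕ),
        μ ((ESet X s N t ∩ {ω | X t ω = il}) ∩ {ω | (X (t+1) ω).1 = j})
      = ∑' il : (Fin k → ℕ) × (Fin m → ℕ),
        ENNReal.ofReal (P il.1 j) * μ (ESet X s N t ∩ {ω | X t ω = il}) := by
        exact tsum_congr hterm
    _ = ∑' i, ∑' l, ENNReal.ofReal (P i j) * μ (ESet X s N t ∩ {ω | X t ω = (i, l)}) :=
        ENNReal.tsum_prod (f := fun i l =>
          ENNReal.ofReal (P i j) * μ (ESet X s N t ∩ {ω | X t ω = (i, l)}))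
    _ = ∑' i, ENNReal.ofReal (P i j) * rhoE μ X s N t i := by
        refine tsum_congr fun i => ?_
        rw [ENNReal.tsum_mul_left]
        congr 1
        have hU2 : ESet X s N t ∩ {ω | (X t ω).1 = i}
            = ⋃ l, (ESet X s N t ∩ {ω | X t ω = (i, l)}) := by
          ext ω
          simp only [Set.mem_iUnion, Set.mem_inter_iff, Set.mem_setOf_eq]
          constructor
          · rintro ⟨h1, h2⟩
            exact ⟨(X t ω).2, h1, by rw [← h2]⟩
          · rintro ⟨l, h1, h2⟩
            exact ⟨h1, by rw [h2]⟩
        have hmeas2 : ∀ l : Fin m → ℕ, MeasurableSet (ESet X s N t ∩ {ω | X t ω = (i, l)}) :=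
          fun l => (ESet_measurable X s hX N t).inter (measurable_X_set hX t {(i, l)})
        have hdisj2 : Pairwise (Function.onFun Disjoint fun l : Fin m → ℕ =>
            ESet X s N t ∩ {ω | X t ω = (i, l)}) := by
          intro l l' hll'
          refine Set.disjoint_left.2 fun ω h1 h2 => hll' ?_
          have := h1.2.symm.trans h2.2
          exact (Prod.ext_iff.1 this).2
        rw [rhoE, hU2, measure_iUnion hdisj2 hmeas2]

end Main

set_option linter.unusedSectionVars false
set_option maxHeartbeats 1000000


section Err
variable {I : Type*} [Nonempty I] {P : I → I → ℝ} {π : I → ℝ}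

lemma pi_le_one (hπ : IsProbabilityVector π) (j : I) : π j ≤ 1 :=
  le_hasSum hπ.2 j fun b _ => hπ.1 b

lemma errD_abs_le_two (hP : IsStochasticMatrix P) (hπ : IsProbabilityVector π)
    (d : ℕ) (i j : I) : |matPow P d i j - π j| ≤ 2 := by
  rw [abs_sub_le_iff]
  have h1 := matPow_nonneg hP d i j
  have h2 := matPow_le_one hP d i j
  have h3 := hπ.1 j
  have h4 := pi_le_one hπ j
  constructor <;> linarith

lemma errD_bddAbove (hP : IsStochasticMatrix P) (hπ : IsProbabilityVector π) (d : ℕ) (i : I) :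
    BddAbove (Set.range fun j => |matPow P d i j - π j|) :=
  ⟨2, fun x ⟨j, hj⟩ => hj ▸ errD_abs_le_two hP hπ d i j⟩

lemma errD_abs_le (hP : IsStochasticMatrix P) (hπ : IsProbabilityVector π) (d : ℕ) (i j : I) :
    |matPow P d i j - π j| ≤ ⨆ j', |matPow P d i j' - π j'| :=
  le_ciSup (errD_bddAbove hP hπ d i) j

lemma errD_nonneg (hP : IsStochasticMatrix P) (hπ : IsProbabilityVector π) (d : ℕ) (i : I) :
    0 ≤ ⨆ j', |matPow P d i j' - π j'| :=
  le_trans (abs_nonneg _) (errD_abs_le hP hπ d i (Classical.arbitrary I))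

lemma errD_le_two (hP : IsStochasticMatrix P) (hπ : IsProbabilityVector π) (d : ℕ) (i : I) :
    (⨆ j', |matPow P d i j' - π j'|) ≤ 2 :=
  ciSup_le fun j => errD_abs_le_two hP hπ d i j

end Err

section Main2
variable {k m : ℕ} {Ω : Type*} [MeasurableSpace Ω] (μ : Measure Ω) [IsProbabilityMeasure μ]
  (X : ℕ → Ω → (Fin k → ℕ) × (Fin m → ℕ)) (s : (Fin k → ℕ) × (Fin m → ℕ))
  (P : (Fin k → ℕ) → (Fin k → ℕ) → ℝ) (π : (Fin k → ℕ) → ℝ)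

noncomputable def GreD (N d : ℕ) : ℝ :=
  ∑' i, (rhoE μ X s N N i).toReal * (⨆ j, |matPow P d i j - π j|)

variable (hX : ∀ n, Measurable (X n))

include hX in
lemma rho_summable (N : ℕ) : Summable fun i => (rhoE μ X s N N i).toReal := by
  apply ENNReal.summable_toReal
  rw [rhoE_mass μ X s hX N N]
  exact measure_ne_top μ _

include hX in
lemma GreD_tendsto (hP : IsStochasticMatrix P) (hπ : IsProbabilityVector π)
    (hErg : ∀ i : Fin k → ℕ,
      Tendsto (fun n => ⨆ j : Fin k → ℕ, |matPow P n i j - π j|) atTop (𝓝 0)) (N : ℕ) :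
    Tendsto (GreD μ X s P π N) atTop (𝓝 0) := by
  have hsummable := rho_summable μ X s hX N
  have h := tendsto_tsum_of_dominated_convergence
    (f := fun d i => (rhoE μ X s N N i).toReal * (⨆ j, |matPow P d i j - π j|))
    (g := fun _ => (0 : ℝ)) (bound := fun i => 2 * (rhoE μ X s N N i).toReal)
    (by simpa using hsummable.mul_left 2)
    (fun i => by simpa using (hErg i).const_mul (rhoE μ X s N N i).toReal)
    (Filter.Eventually.of_forall fun d i => by
      show ‖(rhoE μ X s N N i).toReal * (⨆ j, |matPow P d i j - π j|)‖
        ≤ 2 * (rhoE μ X s N N i).toReal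
      rw [Real.norm_eq_abs, abs_mul, abs_of_nonneg ENNReal.toReal_nonneg,
        abs_of_nonneg (errD_nonneg hP hπ d i)]
      calc (rhoE μ X s N N i).toReal * (⨆ j, |matPow P d i j - π j|)
          ≤ (rhoE μ X s N N i).toReal * 2 :=
            mul_le_mul_of_nonneg_left (errD_le_two hP hπ d i) ENNReal.toReal_nonneg
        _ = 2 * (rhoE μ X s N N i).toReal := by ring)
  exact (by simpa using h : Tendsto (fun d => ∑' i, (rhoE μ X s N N i).toReal
    * (⨆ j, |matPow P d i j - π j|)) atTop (𝓝 0))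

include hX in
lemma sigma_close (hP : IsStochasticMatrix P) (hπ : IsProbabilityVector π) (N d : ℕ)
    (j : Fin k → ℕ) :
    |(∑' i, rhoE μ X s N N i * mpE P d i j).toReal - (μ (ESet X s N N)).toReal * π j|
      ≤ GreD μ X s P π N d := by
  have hsummable := rho_summable μ X s hX N
  have hne : ∀ i, rhoE μ X s N N i * mpE P d i j ≠ ⊤ := fun i =>
    ENNReal.mul_ne_top (measure_ne_top μ _) (by rw [mpE_eq hP]; exact ENNReal.ofReal_ne_top)
  have h1 : (∑' i, rhoE μ X s N N i * mpE P d i j).toReal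
      = ∑' i, (rhoE μ X s N N i).toReal * matPow P d i j := by
    rw [ENNReal.tsum_toReal_eq hne]
    refine tsum_congr fun i => ?_
    rw [ENNReal.toReal_mul, mpE_eq hP, ENNReal.toReal_ofReal (matPow_nonneg hP d i j)]
  have h2 : (μ (ESet X s N N)).toReal * π j = ∑' i, (rhoE μ X s N N i).toReal * π j := by
    rw [← rhoE_mass μ X s hX N N, ENNReal.tsum_toReal_eq (fun i => by exact measure_ne_top μ _),
      tsum_mul_right]
  have hsummable1 : Summable fun i => (rhoE μ X s N N i).toReal * matPow P d i j := by
    refine Summable.of_nonneg_of_le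
      (fun i => mul_nonneg ENNReal.toReal_nonneg (matPow_nonneg hP d i j))
      (fun i => ?_) hsummable
    calc (rhoE μ X s N N i).toReal * matPow P d i j
        ≤ (rhoE μ X s N N i).toReal * 1 :=
          mul_le_mul_of_nonneg_left (matPow_le_one hP d i j) ENNReal.toReal_nonneg
      _ = (rhoE μ X s N N i).toReal := mul_one _
  have hsummable2 : Summable fun i => (rhoE μ X s N N i).toReal * π j :=
    hsummable.mul_right _
  rw [h1, h2, ← Summable.tsum_sub hsummable1 hsummable2]
  have habs : ∀ i, |(rhoE μ X s N N i).toReal * matPow P d i j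
      - (rhoE μ X s N N i).toReal * π j|
      ≤ (rhoE μ X s N N i).toReal * (⨆ j', |matPow P d i j' - π j'|) := by
    intro i
    rw [← mul_sub, abs_mul, abs_of_nonneg ENNReal.toReal_nonneg]
    exact mul_le_mul_of_nonneg_left (errD_abs_le hP hπ d i j) ENNReal.toReal_nonneg
  have hsummableG : Summable fun i =>
      (rhoE μ X s N N i).toReal * (⨆ j', |matPow P d i j' - π j'|) := by
    refine Summable.of_nonneg_of_le
      (fun i => mul_nonneg ENNReal.toReal_nonneg (errD_nonneg hP hπ d i)) (fun i => ?_)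
      (hsummable.mul_left 2)
    calc (rhoE μ X s N N i).toReal * (⨆ j', |matPow P d i j' - π j'|)
        ≤ (rhoE μ X s N N i).toReal * 2 :=
          mul_le_mul_of_nonneg_left (errD_le_two hP hπ d i) ENNReal.toReal_nonneg
      _ = 2 * (rhoE μ X s N N i).toReal := by ring
  have hsummable_abs : Summable fun i => |(rhoE μ X s N N i).toReal * matPow P d i j
      - (rhoE μ X s N N i).toReal * π j| :=
    Summable.of_nonneg_of_le (fun i => abs_nonneg _) habs hsummableG
  calc |∑' i, ((rhoE μ X s N N i).toReal * matPow P d i j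
        - (rhoE μ X s N N i).toReal * π j)|
      ≤ ∑' i, |(rhoE μ X s N N i).toReal * matPow P d i j
        - (rhoE μ X s N N i).toReal * π j| := by
        have := norm_tsum_le_tsum_norm (f := fun i => (rhoE μ X s N N i).toReal * matPow P d i j
          - (rhoE μ X s N N i).toReal * π j) (by simpa [Real.norm_eq_abs] using hsummable_abs)
        simpa [Real.norm_eq_abs] using this
    _ ≤ ∑' i, (rhoE μ X s N N i).toReal * (⨆ j', |matPow P d i j' - π j'|) :=
        Summable.tsum_le_tsum habs hsummable_abs hsummableG
    _ = GreD μ X s P π N d := rfl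

end Main2

set_option linter.unusedSectionVars false
set_option maxHeartbeats 1000000

lemma tsum_swap_alg {I : Type*} (a : I → ℝ≥0∞) (Mn : I → I → ℝ≥0∞) (p : I → ℝ≥0∞) :
    ∑' i, p i * ∑' x, a x * Mn x i = ∑' x, a x * ∑' i, Mn x i * p i := by
  calc ∑' i, p i * ∑' x, a x * Mn x i
      = ∑' i, ∑' x, p i * (a x * Mn x i) := tsum_congr fun i => ENNReal.tsum_mul_left.symm
    _ = ∑' x, ∑' i, p i * (a x * Mn x i) := ENNReal.tsum_comm
    _ = ∑' x, a x * ∑' i, Mn x i * p i := tsum_congr fun x => by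
        rw [← ENNReal.tsum_mul_left]
        exact tsum_congr fun i => by ring

section Main3
variable {k m : ℕ} {Ω : Type*} [MeasurableSpace Ω] (μ : Measure Ω) [IsProbabilityMeasure μ]
  (X : ℕ → Ω → (Fin k → ℕ) × (Fin m → ℕ)) (s : (Fin k → ℕ) × (Fin m → ℕ))
  {Q : ((Fin k → ℕ) × (Fin m → ℕ)) → ((Fin k → ℕ) × (Fin m → ℕ)) → ℝ}
  {P : (Fin k → ℕ) → (Fin k → ℕ) → ℝ}
  (hX : ∀ n, Measurable (X n))

lemma ESet_anti (N : ℕ) {t t' : ℕ} (h : t ≤ t') : ESet X s N t' ⊆ ESet X s N t :=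
  fun ω ⟨h0, hpos⟩ => ⟨h0, fun u hu hut r => hpos u hu (le_trans hut h) r⟩

include hX in
lemma rhoE_le_matPow (hQ : (∀ s y, 0 ≤ Q s y) ∧ ∀ s, HasSum (Q s) 1)
    (hmc : IsMarkovChainKernel μ X Q) (hP : IsStochasticMatrix P)
    (h2 : ∀ (n : ℕ) (i j : Fin k → ℕ) (l : Fin m → ℕ), (∀ r, 0 < l r) →
      (μ {ω | X n ω = (i, l) ∧ (X (n + 1) ω).1 = j}).toReal
        = P i j * (μ {ω | X n ω = (i, l)}).toReal)
    (N : ℕ) : ∀ (d : ℕ) (j : Fin k → ℕ),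
    rhoE μ X s N (N + d) j ≤ ∑' i, rhoE μ X s N N i * mpE P d i j := by
  intro d
  induction d with
  | zero =>
    intro j
    have : ∑' i, rhoE μ X s N N i * mpE P 0 i j = rhoE μ X s N N j := by
      rw [tsum_eq_single j]
      · simp [mpE]
      · intro i hij
        simp [mpE, hij]
    rw [Nat.add_zero, this]
  | succ d ih =>
    intro j
    have hstep := ESet_step μ X s hX hQ hmc hP.1 h2 N (N + d) (Nat.le_add_right N d) j
    have h1 : rhoE μ X s N (N + (d+1)) j
        ≤ μ (ESet X s N (N + d) ∩ {ω | (X (N + d + 1) ω).1 = j}) := by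
      rw [rhoE, show N + (d + 1) = N + d + 1 by ring]
      exact measure_mono (Set.inter_subset_inter_left _
        (ESet_anti X s N (Nat.le_succ _)))
    calc rhoE μ X s N (N + (d+1)) j
        ≤ μ (ESet X s N (N + d) ∩ {ω | (X (N + d + 1) ω).1 = j}) := h1
      _ = ∑' i, ENNReal.ofReal (P i j) * rhoE μ X s N (N + d) i := hstep
      _ ≤ ∑' i, ENNReal.ofReal (P i j) * ∑' x, rhoE μ X s N N x * mpE P d x i := by
          gcongr with i
          exact ih i
      _ = ∑' x, rhoE μ X s N N x * ∑' i, mpE P d x i * ENNReal.ofReal (P i j) :=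
          tsum_swap_alg _ _ _
      _ = ∑' x, rhoE μ X s N N x * mpE P (d+1) x j := rfl

include hX in
lemma sigma_mass (hP : IsStochasticMatrix P) (N d : ℕ) :
    ∑' j, ∑' i, rhoE μ X s N N i * mpE P d i j = μ (ESet X s N N) := by
  rw [ENNReal.tsum_comm]
  calc ∑' i, ∑' j, rhoE μ X s N N i * mpE P d i j
      = ∑' i, rhoE μ X s N N i * ∑' j, mpE P d i j :=
        tsum_congr fun i => ENNReal.tsum_mul_left
    _ = ∑' i, rhoE μ X s N N i := by
        refine tsum_congr fun i => ?_
        rw [mpE_row hP d i, mul_one]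
    _ = μ (ESet X s N N) := rhoE_mass μ X s hX N N

end Main3


/-- **Local stability in a transient Markov chain** (Lemma 1 of Adan–Foss–Shneer–Weiss).
If `X = (X₁, X₂)` is a Markov chain on `ℤ₊^k × ℤ₊^m` such that (1) from every initial state,
almost surely every coordinate of `X₂(n) → ∞`, and (2) conditionally on `X₂(n)` having all
coordinates positive, `X₁` makes a transition according to an ergodic stochastic matrix `P`
with stationary distribution `π`, then from every initial state the distribution of `X₁(n)`
converges to `π` in total variation. -/
theorem local_stability_transient_markov_chain
    {k m : ℕ} {Ω : Type*} [MeasurableSpace Ω]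
    (μ : Measure Ω) [IsProbabilityMeasure μ]
    (X : ℕ → Ω → (Fin k → ℕ) × (Fin m → ℕ))
    (hXmeas : ∀ n, Measurable (X n))
    (Q : ((Fin k → ℕ) × (Fin m → ℕ)) → ((Fin k → ℕ) × (Fin m → ℕ)) → ℝ)
    (hQ : IsStochasticMatrix Q)
    (hmc : IsMarkovChainKernel μ X Q)
    (P : (Fin k → ℕ) → (Fin k → ℕ) → ℝ) (π : (Fin k → ℕ) → ℝ)
    (hP : IsStochasticMatrix P) (hπ : IsProbabilityVector π)
    -- `P` is ergodic with unique stationary distribution `π`: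
    (hErg : ∀ i : Fin k → ℕ,
      Tendsto (fun n => ⨆ j : Fin k → ℕ, |matPow P n i j - π j|) atTop (𝓝 0))
    -- (1) for every initial state, a.s. every coordinate of `X₂(n)` tends to `∞`:
    (h1 : ∀ s : (Fin k → ℕ) × (Fin m → ℕ), 0 < μ {ω | X 0 ω = s} →
      μ ({ω | ¬ ∀ r : Fin m, Tendsto (fun n => (X n ω).2 r) atTop atTop}
        ∩ {ω | X 0 ω = s}) = 0)
    -- (2) conditionally on `X₂(n) = l` with all coordinates positive,
    -- `X₁` moves according to `P`:
    (h2 : ∀ (n : ℕ) (i j : Fin k → ℕ) (l : Fin m → ℕ), (∀ r, 0 < l r) →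
      (μ {ω | X n ω = (i, l) ∧ (X (n + 1) ω).1 = j}).toReal
        = P i j * (μ {ω | X n ω = (i, l)}).toReal) :
    -- conclusion: for every initial state, `X₁(n)` converges to `π` in total variation
    ∀ s : (Fin k → ℕ) × (Fin m → ℕ), 0 < μ {ω | X 0 ω = s} →
      Tendsto (fun n => ⨆ j : Fin k → ℕ,
          |(μ {ω | (X n ω).1 = j ∧ X 0 ω = s}).toReal / (μ {ω | X 0 ω = s}).toReal - π j|)
        atTop (𝓝 0) := by
  intro s hs
  classical
  have hX := hXmeas
  set c := μ {ω | X 0 ω = s} with hcdef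
  have hc0 : c ≠ 0 := hs.ne'
  have hcT : c ≠ ⊤ := measure_ne_top μ _
  have hcr : 0 < c.toReal := ENNReal.toReal_pos hc0 hcT
  set Aset : ℕ → Set Ω := fun N => {ω | ∀ u, N ≤ u → ∀ r, 0 < ((X u ω).2 r)} with hAdef
  have hAmeas : ∀ N, MeasurableSet (Aset N) := by
    intro N
    have hA : Aset N = ⋂ (u : ℕ), ⋂ (_ : N ≤ u), X u ⁻¹' {y | ∀ r, 0 < y.2 r} := by
      ext ω; simp [hAdef, Set.mem_iInter]
    rw [hA]
    exact MeasurableSet.iInter fun u => MeasurableSet.iInter fun _ => measurable_X_set hX u _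
  have hX0meas : MeasurableSet {ω | X 0 ω = s} := measurable_X_set hX 0 {s}
  have hdiffmeas : ∀ N, MeasurableSet ({ω | X 0 ω = s} \ Aset N) :=
    fun N => hX0meas.diff (hAmeas N)
  have hAtend : Tendsto (fun N => μ ({ω | X 0 ω = s} \ Aset N)) atTop (𝓝 0) := by
    have hanti : Antitone (fun N => {ω | X 0 ω = s} \ Aset N) := by
      intro N N' h
      refine Set.diff_subset_diff_right ?_
      intro ω hω u hu r
      exact hω u (le_trans h hu) r
    have hlim := tendsto_measure_iInter_atTop (μ := μ)
      (fun N => (hdiffmeas N).nullMeasurableSet) hanti ⟨0, measure_ne_top μ _⟩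
    have hnull : μ (⋂ N, ({ω | X 0 ω = s} \ Aset N)) = 0 := by
      refine measure_mono_null ?_ (h1 s hs)
      intro ω hω
      simp only [Set.mem_iInter] at hω
      refine ⟨?_, (hω 0).1⟩
      intro hT
      have hev : ∀ᶠ n in atTop, ∀ r, (1:ℕ) ≤ (X n ω).2 r :=
        eventually_all.2 fun r => (hT r).eventually_ge_atTop 1
      obtain ⟨N, hN⟩ := eventually_atTop.1 hev
      exact (hω N).2 fun u hu r => lt_of_lt_of_le Nat.zero_lt_one (hN u hu r)
    rw [hnull] at hlim
    exact hlim
  -- the quantitative estimate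
  have key : ∀ N n, N ≤ n → ∀ j,
      |(μ {ω | (X n ω).1 = j ∧ X 0 ω = s}).toReal - c.toReal * π j|
        ≤ 3 * (μ ({ω | X 0 ω = s} \ Aset N)).toReal + GreD μ X s P π N (n - N) := by
    intro N n hNn j
    have hsub0 : ∀ t, ESet X s N t ⊆ {ω | X 0 ω = s} := fun t ω h => h.1
    have hsubA : ∀ t, {ω | X 0 ω = s} ∩ Aset N ⊆ ESet X s N t := by
      rintro t ω ⟨h0, hA⟩
      exact ⟨h0, fun u hu _ r => hA u hu r⟩
    have hβδ : ∀ t, μ ({ω | X 0 ω = s} \ ESet X s N t)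
        ≤ μ ({ω | X 0 ω = s} \ Aset N) := by
      intro t
      refine measure_mono ?_
      rintro ω ⟨h0, hE⟩
      exact ⟨h0, fun hA => hE (hsubA t ⟨h0, hA⟩)⟩
    have hctotal : ∀ t, c = μ (ESet X s N t) + μ ({ω | X 0 ω = s} \ ESet X s N t) := by
      intro t
      rw [hcdef, ← measure_inter_add_diff {ω | X 0 ω = s} (ESet_measurable X s hX N t)]
      congr 2
      exact Set.inter_eq_self_of_subset_right (hsub0 t)
    have hρσ : ∀ j', rhoE μ X s N n j' ≤ ∑' i, rhoE μ X s N N i * mpE P (n - N) i j' := by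
      intro j'
      have h := rhoE_le_matPow μ X s hX ⟨hQ.1, hQ.2⟩ hmc hP h2 N (n - N) j'
      rwa [Nat.add_sub_cancel' hNn] at h
    have hσρ : ∑' i, rhoE μ X s N N i * mpE P (n - N) i j
        ≤ rhoE μ X s N n j + μ ({ω | X 0 ω = s} \ ESet X s N n) := by
      refine iSup_deficit _ _ hρσ ?_ _ ?_ j
      · rw [sigma_mass μ X s hX hP N (n - N)]
        exact measure_ne_top μ _
      · rw [sigma_mass μ X s hX hP N (n - N), rhoE_mass μ X s hX N n]
        calc μ (ESet X s N N) ≤ c := hcdef ▸ measure_mono (hsub0 N)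
          _ = μ (ESet X s N n) + μ ({ω | X 0 ω = s} \ ESet X s N n) := hctotal n
    have hρD : rhoE μ X s N n j ≤ μ {ω | (X n ω).1 = j ∧ X 0 ω = s} := by
      refine measure_mono ?_
      rintro ω ⟨⟨h0, _⟩, hj⟩
      exact ⟨hj, h0⟩
    have hDρ : μ {ω | (X n ω).1 = j ∧ X 0 ω = s}
        ≤ rhoE μ X s N n j + μ ({ω | X 0 ω = s} \ ESet X s N n) := by
      refine le_trans (measure_mono ?_) (measure_union_le _ _)
      rintro ω ⟨hj, h0⟩
      by_cases hE : ω ∈ ESet X s N n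
      · exact Or.inl ⟨hE, hj⟩
      · exact Or.inr ⟨h0, hE⟩
    have e1 : |(μ {ω | (X n ω).1 = j ∧ X 0 ω = s}).toReal - (rhoE μ X s N n j).toReal|
        ≤ (μ ({ω | X 0 ω = s} \ ESet X s N n)).toReal :=
      aux_abs_toReal hρD hDρ (measure_ne_top μ _) (measure_ne_top μ _)
    have e2 : |(∑' i, rhoE μ X s N N i * mpE P (n - N) i j).toReal
        - (rhoE μ X s N n j).toReal|
        ≤ (μ ({ω | X 0 ω = s} \ ESet X s N n)).toReal :=
      aux_abs_toReal (hρσ j) hσρ (measure_ne_top μ _) (measure_ne_top μ _)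
    have e3 : |(∑' i, rhoE μ X s N N i * mpE P (n - N) i j).toReal
        - (μ (ESet X s N N)).toReal * π j| ≤ GreD μ X s P π N (n - N) :=
      sigma_close μ X s P π hX hP hπ N (n - N) j
    have e4 : |(μ (ESet X s N N)).toReal * π j - c.toReal * π j|
        ≤ (μ ({ω | X 0 ω = s} \ ESet X s N N)).toReal := by
      have hc' : c.toReal = (μ (ESet X s N N)).toReal
          + (μ ({ω | X 0 ω = s} \ ESet X s N N)).toReal := by
        rw [hctotal N, ENNReal.toReal_add (measure_ne_top μ _) (measure_ne_top μ _)]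
      have hπj : |π j| ≤ 1 := abs_le.2 ⟨by linarith [hπ.1 j], pi_le_one hπ j⟩
      calc |(μ (ESet X s N N)).toReal * π j - c.toReal * π j|
          = |(μ (ESet X s N N)).toReal - c.toReal| * |π j| := by rw [← sub_mul, abs_mul]
        _ = (μ ({ω | X 0 ω = s} \ ESet X s N N)).toReal * |π j| := by
            rw [hc']
            congr 1
            rw [abs_sub_comm]
            rw [show (μ (ESet X s N N)).toReal
              + (μ ({ω | X 0 ω = s} \ ESet X s N N)).toReal
              - (μ (ESet X s N N)).toReal
              = (μ ({ω | X 0 ω = s} \ ESet X s N N)).toReal by ring]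
            exact abs_of_nonneg ENNReal.toReal_nonneg
        _ ≤ (μ ({ω | X 0 ω = s} \ ESet X s N N)).toReal * 1 :=
            mul_le_mul_of_nonneg_left hπj ENNReal.toReal_nonneg
        _ = (μ ({ω | X 0 ω = s} \ ESet X s N N)).toReal := mul_one _
    have hβnr : (μ ({ω | X 0 ω = s} \ ESet X s N n)).toReal
        ≤ (μ ({ω | X 0 ω = s} \ Aset N)).toReal :=
      ENNReal.toReal_mono (measure_ne_top μ _) (hβδ n)
    have hβNr : (μ ({ω | X 0 ω = s} \ ESet X s N N)).toReal
        ≤ (μ ({ω | X 0 ω = s} \ Aset N)).toReal :=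
      ENNReal.toReal_mono (measure_ne_top μ _) (hβδ N)
    have t1 := abs_sub_le (μ {ω | (X n ω).1 = j ∧ X 0 ω = s}).toReal
      (rhoE μ X s N n j).toReal (∑' i, rhoE μ X s N N i * mpE P (n - N) i j).toReal
    have t2 := abs_sub_le (μ {ω | (X n ω).1 = j ∧ X 0 ω = s}).toReal
      (∑' i, rhoE μ X s N N i * mpE P (n - N) i j).toReal
      ((μ (ESet X s N N)).toReal * π j)
    have t3 := abs_sub_le (μ {ω | (X n ω).1 = j ∧ X 0 ω = s}).toReal
      ((μ (ESet X s N N)).toReal * π j) (c.toReal * π j)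
    have e2' := abs_sub_comm ((∑' i, rhoE μ X s N N i * mpE P (n - N) i j).toReal)
      ((rhoE μ X s N n j).toReal)
    linarith
  -- conclusion
  rw [Metric.tendsto_atTop]
  intro ε hε
  set b := c.toReal * ε / 8 with hbdef
  have hb : 0 < b := by positivity
  have hev1 : ∀ᶠ N in atTop, μ ({ω | X 0 ω = s} \ Aset N) < ENNReal.ofReal b :=
    hAtend.eventually_lt_const (ENNReal.ofReal_pos.2 hb)
  obtain ⟨N, hN⟩ := hev1.exists
  have hδr : (μ ({ω | X 0 ω = s} \ Aset N)).toReal < b := by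
    have h' := (ENNReal.toReal_lt_toReal (measure_ne_top μ _) ENNReal.ofReal_ne_top).2 hN
    rwa [ENNReal.toReal_ofReal hb.le] at h'
  have hGre := GreD_tendsto μ X s P π hX hP hπ hErg N
  obtain ⟨M0, hM0⟩ := Metric.tendsto_atTop.1 hGre b hb
  refine ⟨N + M0, fun n hn => ?_⟩
  have hNn : N ≤ n := by omega
  have hGn : GreD μ X s P π N (n - N) < b := by
    have h' := hM0 (n - N) (by omega)
    rw [Real.dist_eq, sub_zero] at h'
    exact lt_of_le_of_lt (le_abs_self _) h'
  have hFj : ∀ j, |(μ {ω | (X n ω).1 = j ∧ X 0 ω = s}).toReal / c.toReal - π j|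
      ≤ (3 * (μ ({ω | X 0 ω = s} \ Aset N)).toReal + GreD μ X s P π N (n - N)) / c.toReal := by
    intro j
    have hk := key N n hNn j
    have hrw : (μ {ω | (X n ω).1 = j ∧ X 0 ω = s}).toReal / c.toReal - π j
        = ((μ {ω | (X n ω).1 = j ∧ X 0 ω = s}).toReal - c.toReal * π j) / c.toReal := by
      field_simp
    rw [hrw, abs_div, abs_of_pos hcr]
    gcongr
  have hK : (3 * (μ ({ω | X 0 ω = s} \ Aset N)).toReal
      + GreD μ X s P π N (n - N)) / c.toReal < ε := by
    rw [div_lt_iff₀ hcr]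
    nlinarith [mul_pos hcr hε]
  have hbdd : BddAbove (Set.range fun j : Fin k → ℕ =>
      |(μ {ω | (X n ω).1 = j ∧ X 0 ω = s}).toReal / c.toReal - π j|) := by
    refine ⟨(3 * (μ ({ω | X 0 ω = s} \ Aset N)).toReal
      + GreD μ X s P π N (n - N)) / c.toReal, ?_⟩
    rintro x ⟨j, hj⟩
    exact hj ▸ hFj j
  have hsup_le : (⨆ j : Fin k → ℕ,
      |(μ {ω | (X n ω).1 = j ∧ X 0 ω = s}).toReal / c.toReal - π j|)
      ≤ (3 * (μ ({ω | X 0 ω = s} \ Aset N)).toReal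
        + GreD μ X s P π N (n - N)) / c.toReal := ciSup_le hFj
  have hsup_nonneg : 0 ≤ ⨆ j : Fin k → ℕ,
      |(μ {ω | (X n ω).1 = j ∧ X 0 ω = s}).toReal / c.toReal - π j| :=
    le_trans (abs_nonneg _) (le_ciSup hbdd (Classical.arbitrary _))
  rw [Real.dist_eq, sub_zero, abs_of_nonneg hsup_nonneg]
  exact lt_of_le_of_lt hsup_le hK
end

section
/- Let 0 < α < 1/2 and C > 0. Let ψ and t be independent nonnegative-integer-valued random variables with x^α · ℙ(ψ > x) → 1 and x^{1/2} · ℙ(t > x) → C as x → ∞. Then ℙ(ψ − t > x) / ℙ(ψ > x) → 1 and ℙ(t − ψ > x) / ℙ(t > x) → 1 as x → ∞. -/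
open MeasureTheory Filter Topology ProbabilityTheory

lemma tail_to_zero (a c : ℝ) (ha : 0 < a) (F : ℝ → ℝ)
    (h : Tendsto (fun x => x ^ a * F x) atTop (𝓝 c)) : Tendsto F atTop (𝓝 0) := by
  have h1 : Tendsto (fun x : ℝ => x ^ (-a) * (x ^ a * F x)) atTop (𝓝 (0 * c)) :=
    (tendsto_rpow_neg_atTop ha).mul h
  rw [zero_mul] at h1
  refine h1.congr' ?_
  filter_upwards [eventually_gt_atTop 0] with x hx
  rw [← mul_assoc, ← Real.rpow_add hx, neg_add_cancel, Real.rpow_zero, one_mul]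

noncomputable def sh (x : ℝ) : ℝ := x + x ^ (1/2 : ℝ)

lemma sh_atTop : Tendsto sh atTop atTop :=
  tendsto_atTop_mono' atTop
    ((eventually_ge_atTop (0:ℝ)).mono fun x hx =>
      le_add_of_nonneg_right (Real.rpow_nonneg hx _)) tendsto_id

lemma ratio_shift (a c : ℝ) (ha : 0 < a) (hc : 0 < c) (F : ℝ → ℝ)
    (h : Tendsto (fun x => x ^ a * F x) atTop (𝓝 c)) :
    Tendsto (fun x => F (sh x) / F x) atTop (𝓝 1) := by
  have hcomp : Tendsto (fun x => (sh x) ^ a * F (sh x)) atTop (𝓝 c) := h.comp sh_atTop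
  -- x / sh x → 1
  have hq : Tendsto (fun x : ℝ => x / sh x) atTop (𝓝 1) := by
    have h2 : Tendsto (fun x : ℝ => (1 + (x ^ (1/2:ℝ))⁻¹)⁻¹) atTop (𝓝 1) := by
      have : Tendsto (fun x : ℝ => 1 + (x ^ (1/2:ℝ))⁻¹) atTop (𝓝 (1 + 0)) :=
        tendsto_const_nhds.add ((tendsto_rpow_atTop (by norm_num)).inv_tendsto_atTop)
      rw [add_zero] at this
      simpa using this.inv₀ one_ne_zero
    refine h2.congr' ?_
    filter_upwards [eventually_gt_atTop 0] with x hx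
    have hxr : (0:ℝ) < x ^ (1/2:ℝ) := Real.rpow_pos_of_pos hx _
    have hss : x ^ (1/2:ℝ) * x ^ (1/2:ℝ) = x := by
      rw [← Real.rpow_add hx]; norm_num
    have hshpos : (0:ℝ) < sh x := by unfold sh; linarith
    rw [eq_comm, div_eq_iff hshpos.ne']
    field_simp [sh]
    unfold sh; linear_combination -hss
  have hqa : Tendsto (fun x : ℝ => (x / sh x) ^ a) atTop (𝓝 1) := by
    have := (Real.continuousAt_rpow_const 1 a (Or.inl one_ne_zero)).tendsto.comp hq
    simpa [Real.one_rpow, Function.comp_def] using this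
  have hmain : Tendsto (fun x => ((sh x) ^ a * F (sh x)) / (x ^ a * F x) * (x / sh x) ^ a)
      atTop (𝓝 (c / c * 1)) := (hcomp.div h hc.ne').mul hqa
  rw [div_self hc.ne', one_mul] at hmain
  refine hmain.congr' ?_
  have hF : ∀ᶠ x in atTop, c/2 < x ^ a * F x := h.eventually (eventually_gt_nhds (by linarith))
  filter_upwards [eventually_gt_atTop 0, hF] with x hx hFx
  have hxa : (0:ℝ) < x ^ a := Real.rpow_pos_of_pos hx _
  have hsh : (0:ℝ) < sh x := by
    have : (0:ℝ) < x ^ (1/2:ℝ) := Real.rpow_pos_of_pos hx _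
    unfold sh; linarith
  have hsha : (0:ℝ) < (sh x) ^ a := Real.rpow_pos_of_pos hsh _
  have hFne : F x ≠ 0 := by
    intro h0; rw [h0, mul_zero] at hFx; linarith
  rw [Real.div_rpow hx.le hsh.le]
  field_simp

lemma aux_tail {Ω : Type*} [MeasurableSpace Ω] (μ : Measure Ω) [IsProbabilityMeasure μ]
    (a c : ℝ) (ha : 0 < a) (hc : 0 < c) (f g : Ω → ℕ)
    (hf : Measurable f) (hg : Measurable g) (hind : IndepFun f g μ)
    (hftail : Tendsto (fun x : ℝ => x ^ a * (μ {ω | x < (f ω : ℝ)}).toReal) atTop (𝓝 c))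
    (hg0 : Tendsto (fun x : ℝ => (μ {ω | x < (g ω : ℝ)}).toReal) atTop (𝓝 0)) :
    Tendsto (fun x : ℝ =>
        (μ {ω | x < (f ω : ℝ) - (g ω : ℝ)}).toReal / (μ {ω | x < (f ω : ℝ)}).toReal)
      atTop (𝓝 1) := by
  set F : ℝ → ℝ := fun x => (μ {ω | x < (f ω : ℝ)}).toReal with hF
  set G : ℝ → ℝ := fun x => (μ {ω | x < (g ω : ℝ)}).toReal with hG
  have hFpos : ∀ᶠ x in atTop, 0 < F x := by
    filter_upwards [eventually_gt_atTop 0,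
      hftail.eventually (eventually_gt_nhds (half_lt_self hc))] with x hx h2
    by_contra h0
    push_neg at h0
    have : x ^ a * F x ≤ 0 :=
      mul_nonpos_of_nonneg_of_nonpos (Real.rpow_pos_of_pos hx a).le h0
    linarith
  -- upper bound
  have hupper : ∀ᶠ x in atTop, (μ {ω | x < (f ω : ℝ) - (g ω : ℝ)}).toReal / F x ≤ 1 := by
    filter_upwards [hFpos] with x hx
    rw [div_le_one hx]
    refine ENNReal.toReal_mono (measure_ne_top μ _) (measure_mono fun ω hω => ?_)
    exact lt_of_lt_of_le hω (sub_le_self _ (by positivity : (0:ℝ) ≤ (g ω : ℝ)))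
  -- lower bound function
  have hlower : ∀ᶠ x in atTop,
      F (sh x) * (1 - G (x ^ (1/2:ℝ))) / F x
        ≤ (μ {ω | x < (f ω : ℝ) - (g ω : ℝ)}).toReal / F x := by
    filter_upwards [hFpos] with x hx
    rw [div_le_div_iff_of_pos_right hx]
    set A : Set Ω := f ⁻¹' {n : ℕ | sh x < (n : ℝ)}
    set S : Set Ω := g ⁻¹' {n : ℕ | x ^ (1/2:ℝ) < (n : ℝ)}
    have hBS : g ⁻¹' ({n : ℕ | x ^ (1/2:ℝ) < (n : ℝ)}ᶜ) = Sᶜ := by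
      rw [Set.preimage_compl]
    have hmul : μ (A ∩ Sᶜ) = μ A * μ Sᶜ := by
      rw [← hBS]
      exact hind.measure_inter_preimage_eq_mul _ _ trivial trivial
    have hSc : μ Sᶜ = 1 - μ S := prob_compl_eq_one_sub (hg trivial)
    have hsub : A ∩ Sᶜ ⊆ {ω | x < (f ω : ℝ) - (g ω : ℝ)} := by
      rintro ω ⟨hA, hS⟩
      have hA' : sh x < (f ω : ℝ) := hA
      have hS' : (g ω : ℝ) ≤ x ^ (1/2:ℝ) := not_lt.1 hS
      have hsh : sh x = x + x ^ (1/2:ℝ) := rfl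
      show x < (f ω : ℝ) - (g ω : ℝ)
      linarith
    calc F (sh x) * (1 - G (x ^ (1/2:ℝ)))
        = (μ A * μ Sᶜ).toReal := by
          rw [ENNReal.toReal_mul, hSc,
            ENNReal.toReal_sub_of_le prob_le_one ENNReal.one_ne_top, ENNReal.toReal_one]
          rfl
      _ = (μ (A ∩ Sᶜ)).toReal := by rw [hmul]
      _ ≤ _ := ENNReal.toReal_mono (measure_ne_top μ _) (measure_mono hsub)
  -- limit of the lower bound
  have hL : Tendsto (fun x : ℝ => F (sh x) * (1 - G (x ^ (1/2:ℝ))) / F x) atTop (𝓝 1) := by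
    have h1 : Tendsto (fun x : ℝ => F (sh x) / F x * (1 - G (x ^ (1/2:ℝ))))
        atTop (𝓝 (1 * (1 - 0))) :=
      (ratio_shift a c ha hc F hftail).mul
        (tendsto_const_nhds.sub (hg0.comp (tendsto_rpow_atTop (by norm_num))))
    norm_num at h1
    refine h1.congr fun x => ?_
    rw [mul_div_right_comm]
  exact tendsto_of_tendsto_of_tendsto_of_le_of_le' hL tendsto_const_nhds hlower hupper


/-- **Tail equivalence for differences of independent regularly varying random variables**
(equation (5) of Adan–Foss–Shneer–Weiss). Let `0 < α < 1/2`, `C > 0`, and let `ψ, t` be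
independent `ℤ₊`-valued random variables with `ℙ(ψ > x) ∼ x^{-α}` and
`ℙ(t > x) ∼ C x^{-1/2}` as `x → ∞`. Then `ℙ(ψ - t > x) ∼ ℙ(ψ > x)` and
`ℙ(t - ψ > x) ∼ ℙ(t > x)` as `x → ∞`. -/
theorem tail_equivalence_of_difference
    {Ω : Type*} [MeasurableSpace Ω] (μ : Measure Ω) [IsProbabilityMeasure μ]
    (α C : ℝ) (hα0 : 0 < α) (hα : α < 1 / 2) (hC : 0 < C)
    (ψ t : Ω → ℕ) (hψmeas : Measurable ψ) (htmeas : Measurable t)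
    (hindep : IndepFun ψ t μ)
    -- `ℙ(ψ > x) ∼ x^{-α}`:
    (hψtail : Tendsto (fun x : ℝ => x ^ α * (μ {ω | x < (ψ ω : ℝ)}).toReal)
      atTop (𝓝 1))
    -- `ℙ(t > x) ∼ C x^{-1/2}`:
    (httail : Tendsto (fun x : ℝ => x ^ (1 / 2 : ℝ) * (μ {ω | x < (t ω : ℝ)}).toReal)
      atTop (𝓝 C)) :
    -- `ℙ(ψ - t > x) / ℙ(ψ > x) → 1`:
    Tendsto (fun x : ℝ =>
        (μ {ω | x < (ψ ω : ℝ) - (t ω : ℝ)}).toReal / (μ {ω | x < (ψ ω : ℝ)}).toReal)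
      atTop (𝓝 1)
    -- and `ℙ(t - ψ > x) / ℙ(t > x) → 1`:
    ∧ Tendsto (fun x : ℝ =>
        (μ {ω | x < (t ω : ℝ) - (ψ ω : ℝ)}).toReal / (μ {ω | x < (t ω : ℝ)}).toReal)
      atTop (𝓝 1) := by
  refine ⟨aux_tail μ α 1 hα0 one_pos ψ t hψmeas htmeas hindep hψtail
      (tail_to_zero (1/2) C (by norm_num) _ httail),
    aux_tail μ (1/2) C (by norm_num) hC t ψ htmeas hψmeas hindep.symm httail
      (tail_to_zero α 1 hα0 _ hψtail)⟩
end

section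
/- Let 0 < α < 1 and let ψ be a nonnegative random variable with x^α · ℙ(ψ > x) → 1 as x → ∞. Define the truncated mean m₊(x) = E[min(ψ, x)] for x > 0. Then m₊(x) · (1−α) / x^{1−α} → 1 as x → ∞, i.e. m₊(x) ∼ x^{1−α}/(1−α). -/
open MeasureTheory Filter Topology
open Set

/-- **Truncated-mean asymptotics for a regularly varying tail**
(Remark 2 of Adan–Foss–Shneer–Weiss). Let `0 < α < 1` and let `ψ` be a nonnegative
random variable with `ℙ(ψ > x) ∼ x^{-α}` as `x → ∞`. Then the truncated mean
`m₊(x) = E[min(ψ, x)]` satisfies `m₊(x) ∼ x^{1-α}/(1-α)` as `x → ∞`. -/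
theorem truncated_mean_asymptotics
    {Ω : Type*} [MeasurableSpace Ω] (μ : Measure Ω) [IsProbabilityMeasure μ]
    (α : ℝ) (hα0 : 0 < α) (hα1 : α < 1)
    (ψ : Ω → ℝ) (hψmeas : Measurable ψ) (hψnonneg : ∀ ω, 0 ≤ ψ ω)
    -- `ℙ(ψ > x) ∼ x^{-α}`:
    (hψtail : Tendsto (fun x : ℝ => x ^ α * (μ {ω | x < ψ ω}).toReal) atTop (𝓝 1)) :
    -- `m₊(x) (1-α) / x^{1-α} → 1`:
    Tendsto (fun x : ℝ => (∫ ω, min (ψ ω) x ∂μ) * (1 - α) / x ^ (1 - α))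
      atTop (𝓝 1) := by
  classical
  set g : ℝ → ℝ := fun t => (μ {ω | t < ψ ω}).toReal with hgdef
  have g_anti : Antitone g := fun s t hst =>
    ENNReal.toReal_mono (measure_ne_top μ _)
      (measure_mono fun ω hω => lt_of_le_of_lt hst hω)
  have g_meas : Measurable g := g_anti.measurable
  have g_nonneg : ∀ t, 0 ≤ g t := fun t => ENNReal.toReal_nonneg
  have g_le_one : ∀ t, g t ≤ 1 := by
    intro t
    have := prob_le_one (μ := μ) (s := {ω | t < ψ ω})
    simpa using ENNReal.toReal_mono ENNReal.one_ne_top this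
  have g_int : ∀ s : Set ℝ, volume s < ⊤ → IntegrableOn g s := by
    intro s hs
    refine Integrable.mono' ((integrableOn_const_iff (C := (1:ℝ))).2 (Or.inr hs))
      g_meas.aestronglyMeasurable.restrict (Eventually.of_forall fun t => ?_)
    rw [Real.norm_eq_abs, abs_of_nonneg (g_nonneg t)]; exact g_le_one t
  -- layer cake
  have key : ∀ x : ℝ, 0 < x → (∫ ω, min (ψ ω) x ∂μ) = ∫ t in Ioo 0 x, g t := by
    intro x hx
    have f_int : Integrable (fun ω => min (ψ ω) x) μ := by
      refine Integrable.mono' (integrable_const x)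
        ((hψmeas.min measurable_const).aestronglyMeasurable)
        (Eventually.of_forall fun ω => ?_)
      rw [Real.norm_eq_abs, abs_of_nonneg (le_min (hψnonneg ω) hx.le)]
      exact min_le_right _ _
    rw [f_int.integral_eq_integral_meas_lt
      (Eventually.of_forall fun ω => le_min (hψnonneg ω) hx.le)]
    rw [setIntegral_eq_of_subset_of_ae_diff_eq_zero nullMeasurableSet_Ioi
      (Ioo_subset_Ioi_self : Ioo 0 x ⊆ Ioi 0) (Eventually.of_forall fun t ht => ?_)]
    · refine setIntegral_congr_fun measurableSet_Ioo fun t ht => ?_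
      have : {a | t < min (ψ a) x} = {ω | t < ψ ω} := by
        ext a; simp [lt_min_iff, ht.2]
      rw [this]; rfl
    · have hxt : x ≤ t := by
        rcases ht with ⟨h1, h2⟩
        simp only [mem_Ioo, not_and, not_lt] at h2
        exact h2 h1
      have hempty : ∀ P : Ω → Prop, {a | P a ∧ t < x} = ∅ := by
        intro P; ext a
        simp only [mem_setOf_eq, mem_empty_iff_false, iff_false, not_and]
        intro _; linarith
      simp [lt_min_iff, hempty]
  -- main asymptotic for the integral of g
  have main : Tendsto (fun x : ℝ => (∫ t in Ioo 0 x, g t) * (1 - α) / x ^ (1 - α))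
      atTop (𝓝 1) := by
    rw [Metric.tendsto_atTop]
    intro ε hε
    set δ := ε / 4 with hδdef
    have hδ0 : 0 < δ := by positivity
    obtain ⟨T₀, hT₀⟩ := Metric.tendsto_atTop.mp hψtail δ hδ0
    set T := max T₀ 1 with hTdef
    have hT1 : (1 : ℝ) ≤ T := le_max_right _ _
    have hTpos : (0 : ℝ) < T := lt_of_lt_of_le one_pos hT1
    have h1α : (0 : ℝ) < 1 - α := by linarith
    have gbound : ∀ t : ℝ, T ≤ t →
        (1 - δ) * t ^ (-α) ≤ g t ∧ g t ≤ (1 + δ) * t ^ (-α) := by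
      intro t ht
      have htpos : (0 : ℝ) < t := lt_of_lt_of_le hTpos ht
      have h := hT₀ t (le_trans (le_max_left _ _) ht)
      rw [Real.dist_eq, abs_lt] at h
      have hpow : (0 : ℝ) < t ^ α := Real.rpow_pos_of_pos htpos α
      have hinv : t ^ (-α) = (t ^ α)⁻¹ := Real.rpow_neg htpos.le α
      constructor
      · rw [hinv, mul_inv_le_iff₀ hpow]
        nlinarith [h.1]
      · rw [hinv, le_mul_inv_iff₀ hpow]
        nlinarith [h.2]
    have I1_nonneg : 0 ≤ ∫ t in Ioc 0 T, g t :=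
      setIntegral_nonneg measurableSet_Ioc fun t _ => g_nonneg t
    have I1_le : (∫ t in Ioc 0 T, g t) ≤ T := by
      have h := setIntegral_mono_on (s := Ioc (0:ℝ) T) (g_int _ (by simp [Real.volume_Ioc]))
        ((integrableOn_const_iff (C := (1:ℝ))).2 (Or.inr (by simp [Real.volume_Ioc])))
        measurableSet_Ioc (fun t _ => g_le_one t)
      simpa [Real.volume_Ioc, ENNReal.toReal_ofReal hTpos.le, max_eq_left hTpos.le] using h
    set C := max (T * (1 - α)) (T ^ (1 - α)) with hCdef
    have hCpos : 0 < C := lt_max_of_lt_left (by positivity)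
    have hEv : ∀ᶠ x : ℝ in atTop, C / δ < x ^ (1 - α) :=
      (tendsto_rpow_atTop h1α).eventually_gt_atTop (C / δ)
    obtain ⟨N, hN⟩ := eventually_atTop.mp (hEv.and (eventually_ge_atTop (T + 1)))
    refine ⟨N, fun x hx => ?_⟩
    obtain ⟨hxC, hxT⟩ := hN x hx
    have hTx : T < x := by linarith
    have hxpos : 0 < x := lt_trans hTpos hTx
    have hP : (0 : ℝ) < x ^ (1 - α) := Real.rpow_pos_of_pos hxpos _
    have hCsmall : C < δ * x ^ (1 - α) := by
      rw [div_lt_iff₀ hδ0] at hxC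
      nlinarith
    have rpow_int : IntegrableOn (fun t : ℝ => t ^ (-α)) (Ioo T x) := by
      have := intervalIntegral.intervalIntegrable_rpow'
        (a := T) (b := x) (by linarith : (-1:ℝ) < -α)
      rw [intervalIntegrable_iff_integrableOn_Ioc_of_le hTx.le] at this
      exact this.mono_set Ioo_subset_Ioc_self
    have hJ : (∫ t in Ioo T x, t ^ (-α)) = (x ^ (1 - α) - T ^ (1 - α)) / (1 - α) := by
      rw [← integral_Ioc_eq_integral_Ioo, ← intervalIntegral.integral_of_le hTx.le,
        integral_rpow (Or.inl (by linarith : (-1:ℝ) < -α)),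
        show -α + 1 = 1 - α from by ring]
    have hsplit : (∫ t in Ioo 0 x, g t) = (∫ t in Ioc 0 T, g t) + ∫ t in Ioo T x, g t := by
      rw [← Ioc_union_Ioo_eq_Ioo hTpos.le hTx,
        setIntegral_union ((Set.Ioc_disjoint_Ioc_of_le le_rfl).mono_right Ioo_subset_Ioc_self)
          measurableSet_Ioo
          (g_int _ (by simp [Real.volume_Ioc])) (g_int _ (by simp [Real.volume_Ioo]))]
    have I2_le : (∫ t in Ioo T x, g t) ≤ (1 + δ) * ((x ^ (1 - α) - T ^ (1 - α)) / (1 - α)) := by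
      rw [← hJ, ← integral_const_mul]
      exact setIntegral_mono_on (g_int _ (by simp [Real.volume_Ioo]))
        (rpow_int.const_mul _) measurableSet_Ioo fun t ht => (gbound t ht.1.le).2
    have I2_ge : (1 - δ) * ((x ^ (1 - α) - T ^ (1 - α)) / (1 - α)) ≤ ∫ t in Ioo T x, g t := by
      rw [← hJ, ← integral_const_mul]
      exact setIntegral_mono_on (rpow_int.const_mul _)
        (g_int _ (by simp [Real.volume_Ioo])) measurableSet_Ioo fun t ht => (gbound t ht.1.le).1
    have hTP : T ^ (1 - α) ≤ C := le_max_right _ _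
    have hTC : T * (1 - α) ≤ C := le_max_left _ _
    have hQpos : (0:ℝ) < T ^ (1 - α) := Real.rpow_pos_of_pos hTpos _
    set P := x ^ (1 - α) with hPdef
    set Q := T ^ (1 - α) with hQdef
    set I1 := ∫ t in Ioc 0 T, g t with hI1def
    set I2 := ∫ t in Ioo T x, g t with hI2def
    have e1 : (1 + δ) * ((P - Q) / (1 - α)) * (1 - α) = (1 + δ) * (P - Q) := by
      field_simp
    have e2 : (1 - δ) * ((P - Q) / (1 - α)) * (1 - α) = (1 - δ) * (P - Q) := by
      field_simp
    have m1 : I2 * (1 - α) ≤ (1 + δ) * (P - Q) := by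
      calc I2 * (1 - α) ≤ (1 + δ) * ((P - Q) / (1 - α)) * (1 - α) :=
            mul_le_mul_of_nonneg_right I2_le h1α.le
        _ = (1 + δ) * (P - Q) := e1
    have m2 : (1 - δ) * (P - Q) ≤ I2 * (1 - α) := by
      calc (1 - δ) * (P - Q) = (1 - δ) * ((P - Q) / (1 - α)) * (1 - α) := e2.symm
        _ ≤ I2 * (1 - α) := mul_le_mul_of_nonneg_right I2_ge h1α.le
    have hI1' : I1 * (1 - α) ≤ δ * P := by
      have : I1 * (1 - α) ≤ T * (1 - α) := mul_le_mul_of_nonneg_right I1_le h1α.le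
      linarith
    have hδP : 0 < δ * P := mul_pos hδ0 hP
    have hδQ : 0 ≤ δ * Q := le_of_lt (mul_pos hδ0 hQpos)
    have hFsum : (∫ t in Ioo 0 x, g t) * (1 - α) = I1 * (1 - α) + I2 * (1 - α) := by
      rw [hsplit]; ring
    rw [Real.dist_eq, abs_lt]
    have hub : (∫ t in Ioo 0 x, g t) * (1 - α) / P < 1 + ε := by
      rw [div_lt_iff₀ hP]
      have exp1 : (1 + δ) * (P - Q) = P + δ * P - Q - δ * Q := by ring
      have exp2 : (1 + ε) * P = P + 4 * (δ * P) := by rw [hδdef]; ring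
      linarith
    have hlb : 1 - ε < (∫ t in Ioo 0 x, g t) * (1 - α) / P := by
      rw [lt_div_iff₀ hP]
      have exp1 : (1 - δ) * (P - Q) = P - δ * P - Q + δ * Q := by ring
      have exp2 : (1 - ε) * P = P - 4 * (δ * P) := by rw [hδdef]; ring
      have hI1nn : 0 ≤ I1 * (1 - α) := mul_nonneg I1_nonneg h1α.le
      linarith
    constructor <;> linarith
  refine Tendsto.congr' ?_ main
  filter_upwards [eventually_gt_atTop (0 : ℝ)] with x hx
  rw [key x hx]
end
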